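/- arXiv:1212.0581 — 2 statements merged into one kernel-verified Lean document; each statement's English description precedes it below -/
import Mathlib

section
/- Let K be a normal subgroup of a group G and let w = [w_1,w_2] be a multilinear commutator word, where w_1 and w_2 are multilinear commutator words in disjoint sets of variables. Suppose that K is nilpotent of class two. If the image K/Z(K) is a w_1-subgroup in G/Z(K) and is also generated by w_2-values of G/Z(K), then the derived subgroup K' = [K,K] is a w-subgroup in G. -/
open scoped commutatorElement

/-- The set of `w`-values in `G`: all images of the word `w` under
evaluations of the variables in `G`. -/
def wValues (w : FreeGroup ℕ) (G : Type*) [Group G] : Set G :=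
  {g | ∃ f : ℕ → G, FreeGroup.lift f w = g}

/-- The verbal subgroup of `G` determined by the word `w`: the subgroup
generated by the set of `w`-values. -/
def verbalSubgroup (w : FreeGroup ℕ) (G : Type*) [Group G] : Subgroup G :=
  Subgroup.closure (wValues w G)

/-- `IsMCWOn w S` : `w` is a multilinear (outer) commutator word whose set of
variables is exactly `S`.  Every variable is such a word, and the commutator of
two multilinear commutator words in disjoint sets of variables is again one. -/
inductive IsMCWOn : FreeGroup ℕ → Set ℕ → Prop
  | var (i : ℕ) : IsMCWOn (FreeGroup.of i) {i}
  | comm {w₁ w₂ : FreeGroup ℕ} {S₁ S₂ : Set ℕ} :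
      IsMCWOn w₁ S₁ → IsMCWOn w₂ S₂ → Disjoint S₁ S₂ → IsMCWOn ⁅w₁, w₂⁆ (S₁ ∪ S₂)

/-- A multilinear commutator word (outer commutator word). -/
def IsMultilinearCommutatorWord (w : FreeGroup ℕ) : Prop := ∃ S, IsMCWOn w S

/-- `N` is a `w`-subgroup of `G`: `N` is generated by cyclic subgroups `⟨x⟩`
contained in the set of `w`-values of `G`. -/
def IsWSubgroup (w : FreeGroup ℕ) {G : Type*} [Group G] (N : Subgroup G) : Prop :=
  ∃ X : Set G, (∀ x ∈ X, ∀ i : ℤ, x ^ i ∈ wValues w G) ∧ Subgroup.closure X = N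

/-- A group is residually finite if every nontrivial element lies outside some
normal subgroup of finite index. -/
def ResiduallyFinite (G : Type*) [Group G] : Prop :=
  ∀ g : G, g ≠ 1 → ∃ N : Subgroup G, N.Normal ∧ N.FiniteIndex ∧ g ∉ N

/-- The lower central word `γ_k`: `γ_1 = x_1` and `γ_k = [γ_{k-1}, x_k]`. -/
def gammaWord : ℕ → FreeGroup ℕ
  | 0 => 1
  | 1 => FreeGroup.of 0
  | (k + 2) => ⁅gammaWord (k + 1), FreeGroup.of (k + 1)⁆

/-- The image of `M` in `G ⧸ N` is an abelian `w`-subgroup of `G ⧸ N`. -/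
def IsAbelianWSubgroupInQuotient (w : FreeGroup ℕ) {G : Type*} [Group G] (N M : Subgroup G)
    (hN : N.Normal) : Prop :=
  haveI := hN
  IsMulCommutative (M.map (QuotientGroup.mk' N)) ∧ IsWSubgroup w (M.map (QuotientGroup.mk' N))

/-- The image of `M` in `G ⧸ N` is abelian and is a `w`-subgroup of `G ⧸ N` for
every multilinear commutator word `w`. -/
def IsAbelianWSubgroupInQuotientForAllWords {G : Type*} [Group G] (N M : Subgroup G)
    (hN : N.Normal) : Prop :=
  haveI := hN
  IsMulCommutative (M.map (QuotientGroup.mk' N)) ∧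
    ∀ w : FreeGroup ℕ, IsMultilinearCommutatorWord w →
      IsWSubgroup w (M.map (QuotientGroup.mk' N))

/-- The center of a normal subgroup `K ≤ G`, viewed inside `G` as
`C_G(K) ⊓ K`, is normal in `G`. -/
instance centerInNormal {G : Type*} [Group G] (K : Subgroup G) [hK : K.Normal] :
    (Subgroup.centralizer (K : Set G) ⊓ K).Normal := by
  constructor
  intro x hx g
  obtain ⟨hc, hk⟩ := hx
  have hc' : x ∈ Subgroup.centralizer (K : Set G) := hc
  have hk' : x ∈ K := hk
  refine Subgroup.mem_inf.mpr ⟨?_, hK.conj_mem x hk' g⟩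
  rw [Subgroup.mem_centralizer_iff]
  intro h hh
  have hgh : g⁻¹ * h * g ∈ (K : Set G) := by
    have := hK.conj_mem h hh g⁻¹
    simpa [mul_assoc] using this
  have key : (g⁻¹ * h * g) * x = x * (g⁻¹ * h * g) :=
    (Subgroup.mem_centralizer_iff.mp hc') _ hgh
  have e1 : h * (g * x * g⁻¹) = g * ((g⁻¹ * h * g) * x) * g⁻¹ := by group
  rw [e1, key]
  group

/-!
As `K` has class two and `Z(K)` centralizes `K`, the commutator map `K × K → K'` is bilinear
and depends only on the cosets modulo `Z(K)`. Hence `K'` is generated by the commutators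
`[x, y]` with `x ∈ K` lifting the generating `w₁`-set of `K/Z(K)` and `y ∈ K` lifting the
generating `w₂`-values. By bilinearity `[x, y]^i = [x^i, y]`, and replacing `x^i` and `y` by
lifts of the `w₁`-value `(xZ)^i` and of the `w₂`-value `yZ` does not change this commutator,
which is therefore a `[w₁, w₂]`-value once the two evaluations are glued along the disjoint
variable sets.
-/

section CommutatorWords

variable {G H : Type*} [Group G] [Group H]

theorem IsMCWOn.lift_congr {w : FreeGroup ℕ} {S : Set ℕ} (hw : IsMCWOn w S) {f g : ℕ → G}
    (hfg : Set.EqOn f g S) : FreeGroup.lift f w = FreeGroup.lift g w := by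
  induction hw with
  | var i => simpa using hfg rfl
  | comm _ _ _ ih₁ ih₂ =>
    rw [map_commutatorElement, map_commutatorElement, ih₁ (hfg.mono Set.subset_union_left),
      ih₂ (hfg.mono Set.subset_union_right)]

theorem commutatorElement_mem_wValues {w₁ w₂ : FreeGroup ℕ} {S₁ S₂ : Set ℕ}
    (h₁ : IsMCWOn w₁ S₁) (h₂ : IsMCWOn w₂ S₂) (hdisj : Disjoint S₁ S₂) {u v : G}
    (hu : u ∈ wValues w₁ G) (hv : v ∈ wValues w₂ G) : ⁅u, v⁆ ∈ wValues ⁅w₁, w₂⁆ G := by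
  classical
  obtain ⟨f, rfl⟩ := hu
  obtain ⟨g, rfl⟩ := hv
  refine ⟨S₁.piecewise f g, ?_⟩
  rw [map_commutatorElement, h₁.lift_congr (Set.piecewise_eqOn S₁ f g),
    h₂.lift_congr ((Set.piecewise_eqOn_compl S₁ f g).mono hdisj.subset_compl_left)]

theorem exists_mem_wValues_map_eq {φ : G →* H} (hφ : Function.Surjective φ) {w : FreeGroup ℕ}
    {h : H} (hh : h ∈ wValues w H) : ∃ g ∈ wValues w G, φ g = h := by
  obtain ⟨f, rfl⟩ := hh
  refine ⟨_, ⟨Function.surjInv hφ ∘ f, rfl⟩, ?_⟩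
  exact FreeGroup.lift_unique (φ.comp (FreeGroup.lift _)) fun i => by
    simp [Function.surjInv_eq hφ]

end CommutatorWords

theorem Subgroup.map_closure_inter_preimage {G H : Type*} [Group G] [Group H] {φ : G →* H}
    {K : Subgroup G} {X : Set H} (hX : Subgroup.closure X = K.map φ) :
    (Subgroup.closure ((K : Set G) ∩ φ ⁻¹' X)).map φ = K.map φ := by
  have hXφK : X ⊆ φ '' K := by
    rw [← Subgroup.coe_map, ← hX]
    exact Subgroup.subset_closure
  rw [MonoidHom.map_closure, Set.image_inter_preimage, Set.inter_eq_right.2 hXφK, hX]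

section ClassTwo

variable {G : Type*} [Group G] {K : Subgroup G} (hK : ⁅K, K⁆ ≤ Subgroup.centralizer K)
include hK

theorem commute_commutatorElement_of_le_centralizer {a b k : G} (ha : a ∈ K) (hb : b ∈ K)
    (hk : k ∈ K) : Commute ⁅a, b⁆ k :=
  (Subgroup.mem_centralizer_iff.1 (hK (Subgroup.commutator_mem_commutator ha hb)) k hk).symm

def commutatorLeftHom {b : G} (hb : b ∈ K) : K →* G :=
  MonoidHom.mk' (fun a => ⁅(a : G), b⁆) fun a a' => by
    have hab : ⁅(a : G), b⁆ ∈ K := by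
      simp only [commutatorElement_def]
      exact mul_mem (mul_mem (mul_mem a.2 hb) (inv_mem a.2)) (inv_mem hb)
    have central {k : G} (hk : k ∈ K) : Commute ⁅(a' : G), b⁆ k :=
      commute_commutatorElement_of_le_centralizer hK a'.2 hb hk
    calc ⁅(a * a' : G), b⁆ = a * ⁅(a' : G), b⁆ * (a : G)⁻¹ * ⁅(a : G), b⁆ := by group
      _ = ⁅(a : G), b⁆ * ⁅(a' : G), b⁆ := by
        rw [← (central a.2).eq, mul_inv_cancel_right, (central hab).eq]

theorem commutatorElement_mul_left_of_le_centralizer {a a' b : G} (ha : a ∈ K) (ha' : a' ∈ K)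
    (hb : b ∈ K) : ⁅a * a', b⁆ = ⁅a, b⁆ * ⁅a', b⁆ :=
  map_mul (commutatorLeftHom hK hb) (⟨a, ha⟩ : K) ⟨a', ha'⟩

theorem commutatorElement_inv_left_of_le_centralizer {a b : G} (ha : a ∈ K) (hb : b ∈ K) :
    ⁅a⁻¹, b⁆ = ⁅a, b⁆⁻¹ :=
  map_inv (commutatorLeftHom hK hb) (⟨a, ha⟩ : K)

theorem commutatorElement_zpow_left_of_le_centralizer {a b : G} (ha : a ∈ K) (hb : b ∈ K)
    (i : ℤ) : ⁅a ^ i, b⁆ = ⁅a, b⁆ ^ i :=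
  map_zpow (commutatorLeftHom hK hb) (⟨a, ha⟩ : K) i

theorem commutatorElement_eq_of_inv_mul_mem_center {a a' b b' : G} (ha : a ∈ K) (hb : b ∈ K)
    (ha' : a⁻¹ * a' ∈ Subgroup.centralizer K ⊓ K) (hb' : b⁻¹ * b' ∈ Subgroup.centralizer K ⊓ K) :
    ⁅a', b'⁆ = ⁅a, b⁆ := by
  have central {z k : G} (hz : z ∈ Subgroup.centralizer K ⊓ K) (hk : k ∈ K) : ⁅z, k⁆ = 1 :=
    commutatorElement_eq_one_iff_commute.2 (Subgroup.mem_centralizer_iff.1 hz.1 k hk).symm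
  obtain ⟨z, hz, rfl⟩ : ∃ z ∈ Subgroup.centralizer K ⊓ K, a' = a * z :=
    ⟨_, ha', (mul_inv_cancel_left a a').symm⟩
  obtain ⟨z', hz', rfl⟩ : ∃ z' ∈ Subgroup.centralizer K ⊓ K, b' = b * z' :=
    ⟨_, hb', (mul_inv_cancel_left b b').symm⟩
  have hbz' : b * z' ∈ K := mul_mem hb hz'.2
  rw [commutatorElement_mul_left_of_le_centralizer hK ha hz.2 hbz', central hz hbz', mul_one,
    ← commutatorElement_inv, commutatorElement_mul_left_of_le_centralizer hK hb hz'.2 ha,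
    central hz' ha, mul_one, commutatorElement_inv]

theorem commutatorElement_mem_of_mem_closure_left {A : Set G} (hA : A ⊆ K) {N : Subgroup G}
    {b : G} (hb : b ∈ K) (hAN : ∀ x ∈ A, ⁅x, b⁆ ∈ N) {a : G} (ha : a ∈ Subgroup.closure A) :
    ⁅a, b⁆ ∈ N := by
  have hAK : Subgroup.closure A ≤ K := (Subgroup.closure_le K).2 hA
  induction ha using Subgroup.closure_induction with
  | mem x hx => exact hAN x hx
  | one => simp
  | mul x y hx hy ihx ihy =>
    rw [commutatorElement_mul_left_of_le_centralizer hK (hAK hx) (hAK hy) hb]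
    exact mul_mem ihx ihy
  | inv x hx ih =>
    rw [commutatorElement_inv_left_of_le_centralizer hK (hAK hx) hb]
    exact inv_mem ih

theorem commutatorElement_mem_closure_image2 {A B : Set G} (hA : A ⊆ K) (hB : B ⊆ K) {a b : G}
    (ha : a ∈ Subgroup.closure A) (hb : b ∈ Subgroup.closure B) :
    ⁅a, b⁆ ∈ Subgroup.closure (Set.image2 (⁅·, ·⁆) A B) := by
  refine commutatorElement_mem_of_mem_closure_left hK hA ((Subgroup.closure_le K).2 hB hb)
    (fun x hx => ?_) ha
  rw [← commutatorElement_inv, inv_mem_iff]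
  refine commutatorElement_mem_of_mem_closure_left hK hB (hA hx) (fun y hy => ?_) hb
  rw [← commutatorElement_inv, inv_mem_iff]
  exact Subgroup.subset_closure (Set.mem_image2_of_mem hx hy)

end ClassTwo

/-- Let `K ⊴ G` be nilpotent of class two and `w = [w₁,w₂]` a
multilinear commutator word (with `w₁`, `w₂` in disjoint sets of variables).  If
`K/Z(K)` is a `w₁`-subgroup of `G/Z(K)` and is generated by `w₂`-values of
`G/Z(K)`, then `K' = [K,K]` is a `w`-subgroup of `G`.  Here `Z(K) = C_G(K) ⊓ K`. -/
theorem derived_subgroup_is_w_subgroup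
    (G : Type*) [Group G] (K : Subgroup G) [hK : K.Normal]
    (w₁ w₂ : FreeGroup ℕ) (S₁ S₂ : Set ℕ)
    (h₁ : IsMCWOn w₁ S₁) (h₂ : IsMCWOn w₂ S₂) (hdisj : Disjoint S₁ S₂)
    (hnil : ⁅K, K⁆ ≤ Subgroup.centralizer (K : Set G) ⊓ K)
    (hw1 : IsWSubgroup w₁
      (K.map (QuotientGroup.mk' (Subgroup.centralizer (K : Set G) ⊓ K))))
    (hw2 : ∃ Y ⊆ wValues w₂ (G ⧸ (Subgroup.centralizer (K : Set G) ⊓ K)),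
      Subgroup.closure Y
        = K.map (QuotientGroup.mk' (Subgroup.centralizer (K : Set G) ⊓ K))) :
    IsWSubgroup ⁅w₁, w₂⁆ ⁅K, K⁆ := by
  set π := QuotientGroup.mk' (Subgroup.centralizer (K : Set G) ⊓ K)
  have hK₂ : ⁅K, K⁆ ≤ Subgroup.centralizer K := (le_inf_iff.1 hnil).1
  obtain ⟨X, hXw, hXK⟩ := hw1
  obtain ⟨Y, hYw, hYK⟩ := hw2
  refine ⟨Set.image2 (⁅·, ·⁆) (K ∩ π ⁻¹' X) (K ∩ π ⁻¹' Y), ?_, ?_⟩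
  · rintro _ ⟨x, ⟨hxK, hxX⟩, y, ⟨hyK, hyY⟩, rfl⟩ i
    obtain ⟨u, hu, hπu⟩ :=
      exists_mem_wValues_map_eq (QuotientGroup.mk'_surjective _) (hXw _ hxX i)
    obtain ⟨v, hv, hπv⟩ :=
      exists_mem_wValues_map_eq (QuotientGroup.mk'_surjective _) (hYw hyY)
    rw [← commutatorElement_zpow_left_of_le_centralizer hK₂ hxK hyK,
      ← commutatorElement_eq_of_inv_mul_mem_center hK₂ (zpow_mem hxK i) hyK
        (QuotientGroup.eq.1 (hπu.trans (map_zpow π x i)).symm) (QuotientGroup.eq.1 hπv.symm)]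
    exact commutatorElement_mem_wValues h₁ h₂ hdisj hu hv
  · refine le_antisymm ?_ (Subgroup.commutator_le.2 fun a ha b hb => ?_)
    · rw [Subgroup.closure_le]
      rintro _ ⟨x, ⟨hxK, -⟩, y, ⟨hyK, -⟩, rfl⟩
      exact Subgroup.commutator_mem_commutator hxK hyK
    obtain ⟨a₀, ha₀, hπa⟩ :=
      (Subgroup.map_closure_inter_preimage hXK).ge (Subgroup.mem_map_of_mem π ha)
    obtain ⟨b₀, hb₀, hπb⟩ :=
      (Subgroup.map_closure_inter_preimage hYK).ge (Subgroup.mem_map_of_mem π hb)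
    rw [← commutatorElement_eq_of_inv_mul_mem_center hK₂ ha hb (QuotientGroup.eq.1 hπa.symm)
      (QuotientGroup.eq.1 hπb.symm)]
    exact commutatorElement_mem_closure_image2 hK₂ Set.inter_subset_left Set.inter_subset_left
      ha₀ hb₀
end

section
/- Let w be any group-word and G a group having precisely m w-values. If w(G) has finite exponent e, then the order of w(G) is bounded above by a quantity depending only on e and m. -/
open scoped commutatorElement

universe u

/-!
Let `S` be the set of `w`-values, a finite set of size `m` closed under conjugation, and
`H = ⟨S⟩ = w(G)`. Conjugation permutes `S`, so the centralizer of `S` has index at most `m!`,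
and its intersection `K` with `H` is abelian, being centralized by the generators of `H`.
By Schreier's lemma `K` has rank at most `m! * m`, so as an abelian group of exponent
dividing `e` it has order at most `e ^ (m! * m)`; hence `|H| ≤ e ^ (m! * m) * m!`.
-/

open Subgroup
open scoped Nat IsMulCommutative

variable {G : Type*} [Group G]

theorem map_mem_wValues {H : Type*} [Group H] (ψ : G →* H) {w : FreeGroup ℕ} {x : G}
    (hx : x ∈ wValues w G) : ψ x ∈ wValues w H := by
  obtain ⟨f, rfl⟩ := hx
  exact ⟨ψ ∘ f, (FreeGroup.lift_unique (ψ.comp (FreeGroup.lift f)) fun _ => by simp).symm⟩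

theorem conj_mem_wValues {w : FreeGroup ℕ} {x : G} (hx : x ∈ wValues w G) (g : G) :
    g * x * g⁻¹ ∈ wValues w G := by
  simpa using map_mem_wValues (MulAut.conj g).toMonoidHom hx

section ConjStable

variable {S : Set G} (hS : ∀ g : G, ∀ x ∈ S, g * x * g⁻¹ ∈ S)

def conjStableSubMulAction : SubMulAction (ConjAct G) G where
  carrier := S
  smul_mem' c x hx := by simpa [ConjAct.smul_def] using hS (ConjAct.ofConjAct c) x hx

instance [Finite S] : Finite (conjStableSubMulAction hS) := ‹Finite S›

def conjPermHom : G →* Equiv.Perm (conjStableSubMulAction hS) :=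
  (MulAction.toPermHom (ConjAct G) (conjStableSubMulAction hS)).comp
    ConjAct.toConjAct.toMonoidHom

theorem ker_conjPermHom : (conjPermHom hS).ker = centralizer S := by
  ext g
  simp only [MonoidHom.mem_ker, Equiv.Perm.ext_iff, mem_centralizer_iff, conjPermHom,
    MonoidHom.comp_apply, Equiv.Perm.one_apply, MulAction.toPermHom_apply, MulAction.toPerm_apply,
    Subtype.ext_iff, SubMulAction.val_smul, MulEquiv.coe_toMonoidHom, ConjAct.smul_def,
    ConjAct.ofConjAct_toConjAct, Subtype.forall]
  exact forall₂_congr fun a _ => by rw [mul_inv_eq_iff_eq_mul, eq_comm]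

end ConjStable

theorem finiteIndex_centralizer_of_conj_mem {S : Set G} [Finite S]
    (hS : ∀ g : G, ∀ x ∈ S, g * x * g⁻¹ ∈ S) : (centralizer S).FiniteIndex := by
  rw [← ker_conjPermHom hS]
  infer_instance

theorem index_centralizer_le_factorial_of_conj_mem {S : Set G} [Finite S]
    (hS : ∀ g : G, ∀ x ∈ S, g * x * g⁻¹ ∈ S) :
    (centralizer S).index ≤ (Nat.card S)! := by
  rw [← ker_conjPermHom hS, index_ker]
  calc Nat.card (conjPermHom hS).range
      ≤ Nat.card (Equiv.Perm (conjStableSubMulAction hS)) := card_le_card_group _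
    _ = (Nat.card S)! := Nat.card_perm

theorem isMulCommutative_centralizer_subgroupOf_closure (S : Set G) :
    IsMulCommutative ((centralizer S).subgroupOf (closure S)) := by
  rw [← le_centralizer_iff_isMulCommutative]
  intro x hx y _
  have hy : (y : G) ∈ centralizer (centralizer S) := closure_le_centralizer_centralizer S y.2
  exact Subtype.ext (mem_centralizer_iff.mp hy _ (mem_subgroupOf.mp hx)).symm

theorem finite_closure_and_card_le_of_conj_mem {S : Set G} [Finite S]
    (hS : ∀ g : G, ∀ x ∈ S, g * x * g⁻¹ ∈ S) {e : ℕ} (he : 0 < e)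
    (hexp : ∀ g ∈ closure S, g ^ e = 1) :
    Finite (closure S) ∧
      Nat.card (closure S) ≤ e ^ ((Nat.card S)! * Nat.card S) * (Nat.card S)! := by
  set m := Nat.card S
  set K := (centralizer S).subgroupOf (closure S)
  have : IsMulCommutative K := isMulCommutative_centralizer_subgroupOf_closure S
  have := finiteIndex_centralizer_of_conj_mem hS
  have hindex : K.index ≤ m ! :=
    calc K.index = (centralizer S).relIndex (closure S) := rfl
      _ ≤ (centralizer S).relIndex ⊤ := relIndex_le_of_le_right le_top
            (by rw [relIndex_top_right]; exact FiniteIndex.index_ne_zero)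
      _ ≤ m ! := (relIndex_top_right _).trans_le (index_centralizer_le_factorial_of_conj_mem hS)
  have : Group.FG (closure S) := Group.closure_finite_fg S
  have hrank : Group.rank K ≤ m ! * m :=
    (rank_le_index_mul_rank K).trans (Nat.mul_le_mul hindex (rank_closure_finite_le_nat_card S))
  have hcardK : Nat.card K ∣ e ^ (m ! * m) :=
    (card_dvd_exponent_pow_rank' K (n := e) fun g =>
      Subtype.ext (Subtype.ext (by simpa using hexp _ g.1.2))).trans (pow_dvd_pow e hrank)
  have hcardK_pos : 0 < Nat.card K := Nat.pos_of_dvd_of_pos hcardK (pow_pos he _)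
  refine ⟨Nat.finite_of_card_ne_zero ?_, ?_⟩ <;> rw [← K.card_mul_index]
  · exact mul_ne_zero hcardK_pos.ne' FiniteIndex.index_ne_zero
  · exact Nat.mul_le_mul (Nat.le_of_dvd (pow_pos he _) hcardK) hindex

/-- If a group `G` has precisely `m` `w`-values and `w(G)` has
finite exponent `e`, then the order of `w(G)` is `(e,m)`-bounded. -/
theorem verbal_subgroup_order_bounded_of_exponent (e m : ℕ) (he : 0 < e) :
    ∃ B : ℕ, ∀ (G : Type u) [Group G] (w : FreeGroup ℕ),
      (wValues w G).Finite → (wValues w G).ncard = m →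
      (∀ g ∈ verbalSubgroup w G, g ^ e = 1) →
      ((verbalSubgroup w G : Set G)).Finite ∧
        (verbalSubgroup w G : Set G).ncard ≤ B := by
  refine ⟨e ^ (m ! * m) * m !, fun G _ w hfin hm hexp => ?_⟩
  have : Finite (wValues w G) := hfin.to_subtype
  obtain ⟨hfinite, hcard⟩ :=
    finite_closure_and_card_le_of_conj_mem (fun g _ hx => conj_mem_wValues hx g) he hexp
  rw [Nat.card_coe_set_eq, hm] at hcard
  exact ⟨Set.finite_coe_iff.mp hfinite, (Nat.card_coe_set_eq _).symm.trans_le hcard⟩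
end
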